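/- Let F be a submodular function on V with F(∅) = 0 and f its Lovász extension, and for each i ∈ V let h_i : ℝ → ℝ be strictly convex and differentiable with derivative h_i' surjective onto ℝ. Then min_{x ∈ ℝ^V} [ f(x) + Σ_{i∈V} h_i(x_i) ] = max_{y ∈ B(F)} [ − Σ_{i∈V} h_i*(−y_i) ], both optima are attained, the minimizer x* is unique, and for any maximizer y* one has −y*_i = h_i'(x*_i) for all i ∈ V. -/

import Mathlib

/-!
The dual objective `D y = -∑ i, h_i*(-y_i)` is continuous and concave, so it attains its maximum
on the compact convex polytope `B(F)` at some `y*`. Its gradient there is `x*`, where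
`h_i'(x*_i) = -y*_i`, so first-order optimality says that `y*` maximizes `⟨x*, ·⟩` on `B(F)`.
By Edmonds' greedy algorithm this maximum is `f(x*)`, so `f(x*) = ⟨x*, y*⟩`; together with the
Fenchel–Young equalities `h_i(x*_i) + h_i*(-y*_i) = -y*_i x*_i` this closes the duality gap.
In general the gap is the sum of the Lovász gap `f x - ⟨x, y⟩` and of the Fenchel–Young gaps, all
nonnegative, so a dual optimum makes each of them vanish. Uniqueness of `x*` comes from strict
convexity of the primal objective, `f` being convex as the support function of `B(F)`.
-/

open Finset
open Finset

def Submodular {n : ℕ} (F : Finset (Fin n) → ℝ) : Prop :=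
  ∀ S T : Finset (Fin n), F (S ∪ T) + F (S ∩ T) ≤ F S + F T

def basePolytope {n : ℕ} (F : Finset (Fin n) → ℝ) : Set (Fin n → ℝ) :=
  {y | (∀ S : Finset (Fin n), ∑ i ∈ S, y i ≤ F S) ∧ ∑ i, y i = F Finset.univ}

def SortsDesc {n : ℕ} (x : Fin n → ℝ) (σ : Equiv.Perm (Fin n)) : Prop :=
  ∀ j k : Fin n, j ≤ k → x (σ k) ≤ x (σ j)

def lovaszVal {n : ℕ} (F : Finset (Fin n) → ℝ) (x : Fin n → ℝ) (σ : Equiv.Perm (Fin n)) : ℝ :=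
  ∑ k : Fin n, x (σ k) *
    (F ((Finset.univ.filter (fun j => j ≤ k)).image ⇑σ)
      - F ((Finset.univ.filter (fun j => j < k)).image ⇑σ))

def IsLovasz {n : ℕ} (F : Finset (Fin n) → ℝ) (f : (Fin n → ℝ) → ℝ) : Prop :=
  ∀ (x : Fin n → ℝ) (σ : Equiv.Perm (Fin n)), SortsDesc x σ → f x = lovaszVal F x σ

/-- The (real-valued) Fenchel conjugate of a convex function `h : ℝ → ℝ`:
`h*(s) = sup_t (s·t − h(t))` (finite under the hypotheses of the theorem). -/
noncomputable def realConj (h : ℝ → ℝ) (s : ℝ) : ℝ :=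
  sSup (Set.range fun t => s * t - h t)

section Conjugate

variable {S : Set ℝ} {h : ℝ → ℝ} {u t d : ℝ}

theorem ConvexOn.add_mul_sub_le_of_hasDerivAt (hconv : ConvexOn ℝ S h) (hu : u ∈ S) (ht : t ∈ S)
    (hd : HasDerivAt h d u) : h u + d * (t - u) ≤ h t := by
  rcases lt_trichotomy u t with hut | rfl | htu
  · have := hconv.le_slope_of_hasDerivAt hu ht hut hd
    rw [slope_def_field, le_div_iff₀ (sub_pos.2 hut)] at this
    linarith
  · simp
  · have := hconv.slope_le_of_hasDerivAt ht hu htu hd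
    rw [slope_def_field, div_le_iff₀ (sub_pos.2 htu)] at this
    linarith

theorem StrictConvexOn.add_mul_sub_lt_of_hasDerivAt (hconv : StrictConvexOn ℝ S h) (hu : u ∈ S)
    (ht : t ∈ S) (hd : HasDerivAt h d u) (hut : u ≠ t) : h u + d * (t - u) < h t := by
  rcases hut.lt_or_gt with hut | htu
  · have := hconv.lt_slope_of_hasDerivAt hu ht hut hd
    rw [slope_def_field, lt_div_iff₀ (sub_pos.2 hut)] at this
    linarith
  · have := hconv.slope_lt_of_hasDerivAt ht hu htu hd
    rw [slope_def_field, div_lt_iff₀ (sub_pos.2 htu)] at this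
    linarith

theorem StrictConvexOn.strictMono_of_hasDerivAt {h' : ℝ → ℝ} (hconv : StrictConvexOn ℝ Set.univ h)
    (hderiv : ∀ t, HasDerivAt h (h' t) t) : StrictMono h' := fun u v huv =>
  (hconv.lt_slope_of_hasDerivAt trivial trivial huv (hderiv u)).trans
    (hconv.slope_lt_of_hasDerivAt trivial trivial huv (hderiv v))

theorem StrictConvexOn.exists_continuous_hasDerivAt {h' : ℝ → ℝ}
    (hconv : StrictConvexOn ℝ Set.univ h) (hderiv : ∀ t, HasDerivAt h (h' t) t)
    (hsurj : Function.Surjective h') : ∃ g : ℝ → ℝ, Continuous g ∧ ∀ s, HasDerivAt h s (g s) := by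
  let e := StrictMono.orderIsoOfSurjective h' (hconv.strictMono_of_hasDerivAt hderiv) hsurj
  exact ⟨e.symm, e.symm.continuous,
    fun s => (hderiv (e.symm s)).congr_deriv (e.apply_symm_apply s)⟩

theorem ConvexOn.realConj_eq (hconv : ConvexOn ℝ Set.univ h) (hd : HasDerivAt h d t) :
    realConj h d = d * t - h t := by
  refine IsGreatest.csSup_eq ⟨⟨t, rfl⟩, ?_⟩
  rintro _ ⟨v, rfl⟩
  have := hconv.add_mul_sub_le_of_hasDerivAt trivial trivial hd (t := v)
  linarith

theorem ConvexOn.mul_sub_le_realConj (hconv : ConvexOn ℝ Set.univ h) (hd : HasDerivAt h d u)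
    (t : ℝ) : d * t - h t ≤ realConj h d := by
  rw [hconv.realConj_eq hd]
  have := hconv.add_mul_sub_le_of_hasDerivAt trivial trivial hd (t := t)
  linarith

theorem ConvexOn.realConj_add_mul_sub_le (hconv : ConvexOn ℝ Set.univ h) {d' : ℝ}
    (hd : HasDerivAt h d t) (hd' : HasDerivAt h d' u) :
    realConj h d + (d' - d) * t ≤ realConj h d' := by
  have := hconv.mul_sub_le_realConj hd' t
  rw [hconv.realConj_eq hd]
  linarith

theorem StrictConvexOn.eq_of_mul_sub_eq_realConj (hconv : StrictConvexOn ℝ Set.univ h)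
    (hd : HasDerivAt h d u) (heq : d * t - h t = realConj h d) : t = u := by
  by_contra htu
  have := hconv.add_mul_sub_lt_of_hasDerivAt trivial trivial hd (Ne.symm htu)
  rw [hconv.convexOn.realConj_eq hd] at heq
  linarith

theorem ConvexOn.continuous_realConj (hconv : ConvexOn ℝ Set.univ h) {g : ℝ → ℝ}
    (hg : Continuous g) (hgd : ∀ s, HasDerivAt h s (g s)) : Continuous (realConj h) := by
  have hh : Continuous h := continuousOn_univ.1 (hconv.continuousOn isOpen_univ)
  rw [show realConj h = fun s => s * g s - h (g s) from funext fun s => hconv.realConj_eq (hgd s)]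
  fun_prop

end Conjugate

section Greedy

variable {n : ℕ}

def prefixSet (σ : Equiv.Perm (Fin n)) (m : ℕ) : Finset (Fin n) :=
  (univ.filter fun j : Fin n => (j : ℕ) < m).image σ

@[simp]
theorem prefixSet_zero (σ : Equiv.Perm (Fin n)) : prefixSet σ 0 = ∅ := by
  simp [prefixSet]

theorem prefixSet_of_le (σ : Equiv.Perm (Fin n)) {m : ℕ} (hm : n ≤ m) : prefixSet σ m = univ := by
  rw [prefixSet, filter_true_of_mem fun j _ => j.isLt.trans_le hm, image_univ_equiv]

theorem prefixSet_succ (σ : Equiv.Perm (Fin n)) {m : ℕ} (hm : m < n) :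
    prefixSet σ (m + 1) = insert (σ ⟨m, hm⟩) (prefixSet σ m) := by
  rw [prefixSet, prefixSet, ← image_insert]
  congr 1
  ext j
  simp only [mem_insert, mem_filter, mem_univ, true_and, Fin.ext_iff]
  omega

theorem apply_notMem_prefixSet (σ : Equiv.Perm (Fin n)) {m : ℕ} (hm : m < n) :
    σ ⟨m, hm⟩ ∉ prefixSet σ m := by
  simp [prefixSet]

theorem lovaszVal_eq_sum_prefixSet (F : Finset (Fin n) → ℝ) (x : Fin n → ℝ)
    (σ : Equiv.Perm (Fin n)) :
    lovaszVal F x σ = ∑ k : Fin n, x (σ k) * (F (prefixSet σ (k + 1)) - F (prefixSet σ k)) := by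
  simp only [lovaszVal, prefixSet, Nat.lt_succ_iff, Fin.le_def, Fin.lt_def]

theorem lovaszVal_sub (F G : Finset (Fin n) → ℝ) (x : Fin n → ℝ) (σ : Equiv.Perm (Fin n)) :
    lovaszVal (fun S => F S - G S) x σ = lovaszVal F x σ - lovaszVal G x σ := by
  simp only [lovaszVal, ← sum_sub_distrib]
  exact sum_congr rfl fun _ _ => by ring

theorem sum_range_mul_sub_nonneg {a c : ℕ → ℝ} {m : ℕ} (ha : ∀ k, k + 1 < m → a (k + 1) ≤ a k)
    (hc : ∀ k, 0 ≤ c k) (hc0 : c 0 = 0) (hcm : c m = 0) :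
    0 ≤ ∑ k ∈ range m, a k * (c (k + 1) - c k) := by
  have := sum_range_by_parts a (fun k => c (k + 1) - c k) m
  simp only [sum_range_sub (fun k => c k), hc0, hcm, smul_eq_mul, sub_zero, mul_zero,
    zero_sub] at this
  rw [this, neg_nonneg]
  refine sum_nonpos fun k hk => mul_nonpos_of_nonpos_of_nonneg (sub_nonpos.2 (ha k ?_)) (hc _)
  rw [mem_range] at hk
  omega

/-- Summation by parts turns `lovaszVal G x σ` into `∑ k, (x (σ k) - x (σ (k + 1))) * G P_{k+1}`
over the prefix sets `P_{k+1}` of `σ`, the boundary terms `G ∅` and `G univ` being zero. -/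
theorem lovaszVal_nonneg {G : Finset (Fin n) → ℝ} (hG : ∀ S, 0 ≤ G S) (hG0 : G ∅ = 0)
    (hGV : G univ = 0) {x : Fin n → ℝ} {σ : Equiv.Perm (Fin n)} (hσ : SortsDesc x σ) :
    0 ≤ lovaszVal G x σ := by
  let a : ℕ → ℝ := fun k => if hk : k < n then x (σ ⟨k, hk⟩) else 0
  have ha : ∀ k : Fin n, a k = x (σ k) := fun k => dif_pos k.isLt
  rw [lovaszVal_eq_sum_prefixSet]
  simp_rw [← ha]
  rw [Fin.sum_univ_eq_sum_range (fun k => a k * (G (prefixSet σ (k + 1)) - G (prefixSet σ k)))]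
  refine sum_range_mul_sub_nonneg (fun k hk => ?_) (fun k => hG _) (by simp [hG0])
    (by rw [prefixSet_of_le σ le_rfl, hGV])
  simp only [a, dif_pos hk, dif_pos (Nat.lt_of_succ_lt hk)]
  exact hσ _ _ (Fin.mk_le_mk.2 k.le_succ)

def greedy (F : Finset (Fin n) → ℝ) (σ : Equiv.Perm (Fin n)) : Fin n → ℝ :=
  fun i => F (prefixSet σ (σ.symm i + 1)) - F (prefixSet σ (σ.symm i))

@[simp]
theorem greedy_apply_perm (F : Finset (Fin n) → ℝ) (σ : Equiv.Perm (Fin n)) (k : Fin n) :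
    greedy F σ (σ k) = F (prefixSet σ (k + 1)) - F (prefixSet σ k) := by
  simp [greedy]

theorem lovaszVal_eq_dotProduct_greedy (F : Finset (Fin n) → ℝ) (x : Fin n → ℝ)
    (σ : Equiv.Perm (Fin n)) : lovaszVal F x σ = x ⬝ᵥ greedy F σ := by
  rw [lovaszVal_eq_sum_prefixSet, dotProduct, ← Equiv.sum_comp σ (fun i => x i * greedy F σ i)]
  simp only [greedy_apply_perm]

theorem greedy_sum_apply (y : Fin n → ℝ) (σ : Equiv.Perm (Fin n)) :
    greedy (fun S => ∑ i ∈ S, y i) σ = y := by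
  funext i
  obtain ⟨k, rfl⟩ := σ.surjective i
  rw [greedy_apply_perm, prefixSet_succ σ k.isLt, sum_insert (apply_notMem_prefixSet σ k.isLt)]
  simp

theorem sum_greedy {F : Finset (Fin n) → ℝ} (hF0 : F ∅ = 0) (σ : Equiv.Perm (Fin n)) :
    ∑ i, greedy F σ i = F univ := by
  rw [← Equiv.sum_comp σ]
  simp only [greedy_apply_perm]
  rw [Fin.sum_univ_eq_sum_range (fun k => F (prefixSet σ (k + 1)) - F (prefixSet σ k)),
    sum_range_sub (fun k => F (prefixSet σ k)), prefixSet_of_le σ le_rfl, prefixSet_zero, hF0,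
    sub_zero]

theorem Submodular.insert_sub_le {F : Finset (Fin n) → ℝ} (hF : Submodular F)
    {S T : Finset (Fin n)} {e : Fin n} (hST : S ⊆ T) (he : e ∉ T) :
    F (insert e T) - F T ≤ F (insert e S) - F S := by
  have := hF (insert e S) T
  rw [insert_union, union_eq_right.2 hST, insert_inter_of_notMem he, inter_eq_left.2 hST] at this
  linarith

theorem sum_greedy_inter_prefixSet_le {F : Finset (Fin n) → ℝ} (hF0 : F ∅ = 0)
    (hF : Submodular F) (σ : Equiv.Perm (Fin n)) (A : Finset (Fin n)) {m : ℕ} (hm : m ≤ n) :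
    ∑ i ∈ A ∩ prefixSet σ m, greedy F σ i ≤ F (A ∩ prefixSet σ m) := by
  induction m with
  | zero => simp [hF0]
  | succ m ih =>
    have hmn : m < n := hm
    have hnotMem := apply_notMem_prefixSet σ hmn
    rw [prefixSet_succ σ hmn]
    by_cases he : σ ⟨m, hmn⟩ ∈ A
    · have hgain := hF.insert_sub_le (inter_subset_right (s₁ := A)) hnotMem
      rw [← prefixSet_succ σ hmn] at hgain
      rw [inter_insert_of_mem he, sum_insert fun h => hnotMem (mem_inter.1 h).2,
        greedy_apply_perm]
      linarith [ih hmn.le]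
    · rw [inter_insert_of_notMem he]
      exact ih hmn.le

theorem greedy_mem_basePolytope {F : Finset (Fin n) → ℝ} (hF0 : F ∅ = 0) (hF : Submodular F)
    (σ : Equiv.Perm (Fin n)) : greedy F σ ∈ basePolytope F := by
  refine ⟨fun S => ?_, sum_greedy hF0 σ⟩
  simpa [prefixSet_of_le σ le_rfl] using sum_greedy_inter_prefixSet_le hF0 hF σ S le_rfl

/-- `lovaszVal` is linear in the set function and equals `x ⬝ᵥ y` for the modular function
`S ↦ ∑ i ∈ S, y i`. -/
theorem dotProduct_le_lovaszVal {F : Finset (Fin n) → ℝ} (hF0 : F ∅ = 0) {x y : Fin n → ℝ}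
    (hy : y ∈ basePolytope F) {σ : Equiv.Perm (Fin n)} (hσ : SortsDesc x σ) :
    x ⬝ᵥ y ≤ lovaszVal F x σ := by
  have := lovaszVal_nonneg (G := fun S => F S - ∑ i ∈ S, y i) (fun S => sub_nonneg.2 (hy.1 S))
    (by simp [hF0]) (by rw [hy.2, sub_self]) hσ
  rwa [lovaszVal_sub, lovaszVal_eq_dotProduct_greedy (fun S => ∑ i ∈ S, y i), greedy_sum_apply,
    sub_nonneg] at this

theorem exists_sortsDesc (x : Fin n → ℝ) : ∃ σ : Equiv.Perm (Fin n), SortsDesc x σ :=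
  ⟨Tuple.sort (-x), fun _ _ hjk => by simpa using Tuple.monotone_sort (-x) hjk⟩

end Greedy

section Lovasz

variable {n : ℕ} {F : Finset (Fin n) → ℝ} {f : (Fin n → ℝ) → ℝ}

theorem IsLovasz.dotProduct_le (hf : IsLovasz F f) (hF0 : F ∅ = 0) {y : Fin n → ℝ}
    (hy : y ∈ basePolytope F) (x : Fin n → ℝ) : x ⬝ᵥ y ≤ f x := by
  obtain ⟨σ, hσ⟩ := exists_sortsDesc x
  rw [hf x σ hσ]
  exact dotProduct_le_lovaszVal hF0 hy hσ

theorem IsLovasz.isGreatest_dotProduct (hf : IsLovasz F f) (hF0 : F ∅ = 0) (hF : Submodular F)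
    (x : Fin n → ℝ) : IsGreatest ((x ⬝ᵥ ·) '' basePolytope F) (f x) := by
  obtain ⟨σ, hσ⟩ := exists_sortsDesc x
  refine ⟨⟨greedy F σ, greedy_mem_basePolytope hF0 hF σ, ?_⟩, ?_⟩
  · rw [hf x σ hσ, lovaszVal_eq_dotProduct_greedy]
  · rintro _ ⟨y, hy, rfl⟩
    exact hf.dotProduct_le hF0 hy x

theorem IsLovasz.convexOn (hf : IsLovasz F f) (hF0 : F ∅ = 0) (hF : Submodular F) :
    ConvexOn ℝ Set.univ f := by
  refine ⟨convex_univ, fun x _ z _ a b ha hb _ => ?_⟩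
  obtain ⟨⟨y, hy, hfy⟩, -⟩ := hf.isGreatest_dotProduct hF0 hF (a • x + b • z)
  rw [← hfy]
  simp only [add_dotProduct, smul_dotProduct, smul_eq_mul]
  gcongr <;> exact hf.dotProduct_le hF0 hy _

end Lovasz

section BasePolytope

variable {n : ℕ}

theorem convex_basePolytope (F : Finset (Fin n) → ℝ) : Convex ℝ (basePolytope F) := by
  rintro y ⟨hyS, hyV⟩ z ⟨hzS, hzV⟩ a b ha hb hab
  refine ⟨fun S => ?_, ?_⟩
  · simp only [Pi.add_apply, Pi.smul_apply, smul_eq_mul, sum_add_distrib, ← mul_sum]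
    calc a * ∑ i ∈ S, y i + b * ∑ i ∈ S, z i ≤ a * F S + b * F S := by
          gcongr; exacts [hyS S, hzS S]
      _ = F S := by rw [← add_mul, hab, one_mul]
  · simp only [Pi.add_apply, Pi.smul_apply, smul_eq_mul, sum_add_distrib, ← mul_sum, hyV, hzV]
    rw [← add_mul, hab, one_mul]

theorem isClosed_basePolytope (F : Finset (Fin n) → ℝ) : IsClosed (basePolytope F) := by
  have : basePolytope F = (⋂ S, {y | ∑ i ∈ S, y i ≤ F S}) ∩ {y | ∑ i, y i = F univ} := by
    ext
    simp [basePolytope]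
  rw [this]
  exact (isClosed_iInter fun S => isClosed_le (by fun_prop) continuous_const).inter
    (isClosed_eq (by fun_prop) continuous_const)

theorem basePolytope_subset_pi (F : Finset (Fin n) → ℝ) :
    basePolytope F ⊆ Set.univ.pi fun i => Set.Icc (F univ - ∑ j ∈ univ.erase i, F {j}) (F {i}) := by
  rintro y ⟨hyS, hyV⟩ i -
  have hsingleton : ∀ j, y j ≤ F {j} := fun j => by simpa using hyS {j}
  refine ⟨?_, hsingleton i⟩
  have := sum_erase_add univ y (mem_univ i)
  have := sum_le_sum fun j (_ : j ∈ univ.erase i) => hsingleton j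
  linarith

theorem isCompact_basePolytope (F : Finset (Fin n) → ℝ) : IsCompact (basePolytope F) :=
  (isCompact_univ_pi fun _ => isCompact_Icc).of_isClosed_subset (isClosed_basePolytope F)
    (basePolytope_subset_pi F)

end BasePolytope

theorem strictConvexOn_sum_apply {ι : Type*} [Fintype ι] {h : ι → ℝ → ℝ}
    (hh : ∀ i, StrictConvexOn ℝ Set.univ (h i)) :
    StrictConvexOn ℝ Set.univ fun x : ι → ℝ => ∑ i, h i (x i) := by
  refine ⟨convex_univ, fun x _ z _ hxz a b ha hb hab => ?_⟩
  obtain ⟨i₀, hi₀⟩ := Function.ne_iff.1 hxz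
  simp only [Pi.add_apply, Pi.smul_apply, smul_eq_mul, mul_sum, ← sum_add_distrib]
  exact sum_lt_sum (fun i _ => (hh i).convexOn.2 trivial trivial ha.le hb.le hab)
    ⟨i₀, mem_univ _, (hh i₀).2 trivial trivial hi₀ ha hb hab⟩

theorem dotProduct_sub_nonpos_of_isMaxOn {ι : Type*} [Fintype ι] {K : Set (ι → ℝ)}
    (hK : Convex ℝ K) {D : (ι → ℝ) → ℝ} {G : (ι → ℝ) → ι → ℝ} (hG : Continuous G)
    (hDG : ∀ y ∈ K, ∀ z ∈ K, D z ≤ D y + G y ⬝ᵥ (z - y)) {y₀ y : ι → ℝ} (hy₀ : y₀ ∈ K)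
    (hmax : IsMaxOn D K y₀) (hy : y ∈ K) : G y₀ ⬝ᵥ (y - y₀) ≤ 0 := by
  have hsegment : ∀ t ∈ Set.Ioc (0 : ℝ) 1, G (y₀ + t • (y - y₀)) ⬝ᵥ (y - y₀) ≤ 0 := by
    rintro t ⟨ht0, ht1⟩
    have hyt : y₀ + t • (y - y₀) ∈ K := hK.add_smul_sub_mem hy₀ hy ⟨ht0.le, ht1⟩
    have hsuper := hDG _ hyt y₀ hy₀
    rw [show y₀ - (y₀ + t • (y - y₀)) = -(t • (y - y₀)) by abel, dotProduct_neg,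
      dotProduct_smul, smul_eq_mul] at hsuper
    have hmax_t : D (y₀ + t • (y - y₀)) ≤ D y₀ := hmax hyt
    exact nonpos_of_mul_nonpos_right (by linarith) ht0
  have hcont : Continuous fun t : ℝ => G (y₀ + t • (y - y₀)) ⬝ᵥ (y - y₀) := by fun_prop
  have hlim := (hcont.tendsto 0).mono_left (nhdsWithin_le_nhds (s := Set.Ioi 0))
  rw [zero_smul, add_zero] at hlim
  exact le_of_tendsto hlim (Filter.eventually_of_mem (Ioc_mem_nhdsGT zero_lt_one) hsegment)

section Duality

variable {n : ℕ} {F : Finset (Fin n) → ℝ} {f : (Fin n → ℝ) → ℝ} {h g : Fin n → ℝ → ℝ}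

theorem primal_sub_dual_eq (x y : Fin n → ℝ) :
    f x + ∑ i, h i (x i) - -∑ i, realConj (h i) (-(y i)) =
      (f x - x ⬝ᵥ y) + ∑ i, (realConj (h i) (-(y i)) - (-(y i) * x i - h i (x i))) := by
  simp only [dotProduct, sum_sub_distrib, neg_mul, sum_neg_distrib, mul_comm (y _) (x _)]
  ring

theorem dual_le_primal (hf : IsLovasz F f) (hF0 : F ∅ = 0)
    (hconv : ∀ i, ConvexOn ℝ Set.univ (h i)) (hg : ∀ i s, HasDerivAt (h i) s (g i s))
    {y : Fin n → ℝ} (hy : y ∈ basePolytope F) (x : Fin n → ℝ) :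
    -∑ i, realConj (h i) (-(y i)) ≤ f x + ∑ i, h i (x i) := by
  have hgap := primal_sub_dual_eq (f := f) (h := h) x y
  have hlovasz := sub_nonneg.2 (hf.dotProduct_le hF0 hy x)
  have hfenchel : 0 ≤ ∑ i, (realConj (h i) (-(y i)) - (-(y i) * x i - h i (x i))) :=
    sum_nonneg fun i _ => sub_nonneg.2 ((hconv i).mul_sub_le_realConj (hg i _) _)
  linarith

theorem hasDerivAt_of_dual_eq_primal (hf : IsLovasz F f) (hF0 : F ∅ = 0)
    (hconv : ∀ i, StrictConvexOn ℝ Set.univ (h i)) (hg : ∀ i s, HasDerivAt (h i) s (g i s))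
    {x y : Fin n → ℝ} (hy : y ∈ basePolytope F)
    (heq : -∑ i, realConj (h i) (-(y i)) = f x + ∑ i, h i (x i)) (i : Fin n) :
    HasDerivAt (h i) (-(y i)) (x i) := by
  have hfenchel : ∀ i ∈ univ, 0 ≤ realConj (h i) (-(y i)) - (-(y i) * x i - h i (x i)) :=
    fun i _ => sub_nonneg.2 ((hconv i).convexOn.mul_sub_le_realConj (hg i _) _)
  have hgap := primal_sub_dual_eq (f := f) (h := h) x y
  have hlovasz := hf.dotProduct_le hF0 hy x
  have hsum : ∑ i, (realConj (h i) (-(y i)) - (-(y i) * x i - h i (x i))) = 0 := by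
    linarith [sum_nonneg hfenchel]
  have hi := (sum_eq_zero_iff_of_nonneg hfenchel).1 hsum i (mem_univ i)
  have hxi : x i = g i (-(y i)) := (hconv i).eq_of_mul_sub_eq_realConj (hg i _) (by linarith)
  exact hxi ▸ hg i _

theorem dual_le_add_dotProduct (hconv : ∀ i, ConvexOn ℝ Set.univ (h i))
    (hg : ∀ i s, HasDerivAt (h i) s (g i s)) (y z : Fin n → ℝ) :
    -∑ i, realConj (h i) (-(z i)) ≤
      -∑ i, realConj (h i) (-(y i)) + (fun i => g i (-(y i))) ⬝ᵥ (z - y) := by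
  have := sum_le_sum fun i (_ : i ∈ univ) =>
    (hconv i).realConj_add_mul_sub_le (hg i (-(y i))) (hg i (-(z i)))
  have hlin : ∑ i, (-(z i) - -(y i)) * g i (-(y i)) = -∑ i, g i (-(y i)) * (z i - y i) := by
    rw [← sum_neg_distrib]
    exact sum_congr rfl fun i _ => by ring
  simp only [dotProduct, Pi.sub_apply, sum_add_distrib, hlin] at this ⊢
  linarith

theorem dual_eq_primal_of_hasDerivAt (hconv : ∀ i, ConvexOn ℝ Set.univ (h i)) {x y : Fin n → ℝ}
    (hfx : f x = x ⬝ᵥ y) (hd : ∀ i, HasDerivAt (h i) (-(y i)) (x i)) :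
    -∑ i, realConj (h i) (-(y i)) = f x + ∑ i, h i (x i) := by
  have hgap := primal_sub_dual_eq (f := f) (h := h) x y
  rw [hfx, sub_self, zero_add,
    sum_eq_zero fun i _ => sub_eq_zero.2 ((hconv i).realConj_eq (hd i))] at hgap
  linarith

theorem exists_mem_basePolytope_isMaxOn_dotProduct (hF0 : F ∅ = 0) (hF : Submodular F)
    (hconv : ∀ i, ConvexOn ℝ Set.univ (h i)) (hg_cont : ∀ i, Continuous (g i))
    (hg : ∀ i s, HasDerivAt (h i) s (g i s)) :
    ∃ y ∈ basePolytope F,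
      IsMaxOn ((fun i => g i (-(y i))) ⬝ᵥ ·) (basePolytope F) y := by
  have := fun i => (hconv i).continuous_realConj (hg_cont i) (hg i)
  obtain ⟨y, hyB, hymax⟩ := (isCompact_basePolytope F).exists_isMaxOn
    ⟨_, greedy_mem_basePolytope hF0 hF (Equiv.refl _)⟩
    (show Continuous fun y : Fin n → ℝ => -∑ i, realConj (h i) (-(y i)) by fun_prop).continuousOn
  refine ⟨y, hyB, fun z hz => ?_⟩
  have := dotProduct_sub_nonpos_of_isMaxOn (convex_basePolytope F) (by fun_prop)
    (fun y _ z _ => dual_le_add_dotProduct hconv hg y z) hyB hymax hz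
  rwa [dotProduct_sub, sub_nonpos] at this

end Duality

/-- duality for general separable proximal problems,
Eq. (15)–(17) of the appendix:
`min_x [f(x) + Σ_i h_i(x_i)] = max_{y ∈ B(F)} [−Σ_i h_i*(−y_i)]`, both optima
attained, the minimizer `x*` unique, and any maximizer `y*` satisfies
`−y*_i = h_i'(x*_i)` for all `i`. -/
theorem statement19 {n : ℕ} (F : Finset (Fin n) → ℝ) (hF0 : F ∅ = 0) (hF : Submodular F)
    (f : (Fin n → ℝ) → ℝ) (hf : IsLovasz F f)
    (h h' : Fin n → ℝ → ℝ)
    (hconv : ∀ i, StrictConvexOn ℝ (Set.univ : Set ℝ) (h i))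
    (hderiv : ∀ i t, HasDerivAt (h i) (h' i t) t)
    (hsurj : ∀ i, Function.Surjective (h' i)) :
    ∃ xstar : Fin n → ℝ,
      IsLeast (Set.range (fun x : Fin n → ℝ => f x + ∑ i, h i (x i)))
        (f xstar + ∑ i, h i (xstar i)) ∧
      (∀ x : Fin n → ℝ, f x + ∑ i, h i (x i) = f xstar + ∑ i, h i (xstar i) → x = xstar) ∧
      IsGreatest ((fun y : Fin n → ℝ => -∑ i, realConj (h i) (-(y i))) '' basePolytope F)
        (f xstar + ∑ i, h i (xstar i)) ∧
      ∀ y ∈ basePolytope F,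
        -∑ i, realConj (h i) (-(y i)) = f xstar + ∑ i, h i (xstar i) →
        ∀ i, -(y i) = h' i (xstar i) := by
  choose g hg_cont hg using fun i => (hconv i).exists_continuous_hasDerivAt (hderiv i) (hsurj i)
  have hconvex i := (hconv i).convexOn
  obtain ⟨ystar, hyB, hymax⟩ := exists_mem_basePolytope_isMaxOn_dotProduct hF0 hF hconvex hg_cont hg
  let xstar : Fin n → ℝ := fun i => g i (-(ystar i))
  have hfx : f xstar = xstar ⬝ᵥ ystar := (hf.isGreatest_dotProduct hF0 hF xstar).unique
    ⟨⟨ystar, hyB, rfl⟩, by rintro _ ⟨y, hy, rfl⟩; exact hymax hy⟩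
  have hstrong := dual_eq_primal_of_hasDerivAt hconvex hfx fun i => hg i _
  have hmin : IsMinOn (fun x => f x + ∑ i, h i (x i)) Set.univ xstar := fun x _ =>
    hstrong.symm.trans_le (dual_le_primal hf hF0 hconvex hg hyB x)
  refine ⟨xstar, ⟨⟨xstar, rfl⟩, ?_⟩, fun x hx => ?_, ⟨⟨ystar, hyB, hstrong⟩, ?_⟩,
    fun y hy heq i => (hasDerivAt_of_dual_eq_primal hf hF0 hconv hg hy heq i).unique (hderiv i _)⟩
  · rintro _ ⟨x, rfl⟩
    exact hmin (Set.mem_univ x)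
  · exact ((hf.convexOn hF0 hF).add_strictConvexOn (strictConvexOn_sum_apply hconv)).eq_of_isMinOn
      (fun z _ => hx.le.trans (hmin (Set.mem_univ z))) hmin trivial trivial
  · rintro _ ⟨y, hy, rfl⟩
    exact dual_le_primal hf hF0 hconvex hg hy xstar
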